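/- arXiv:2009.13378 — 2 statements merged into one kernel-verified Lean document; each statement's English description precedes it below -/
import Mathlib

section
/- Let Φ be continuous, positive, T-periodic with mean Φ̄ and suppose σ̃ = Φ̄. Then every positive solution R of R'(t) = μ R(t)(Φ(t) P₀(R(t)) − σ̃/3) with μ > 0 satisfies lim_{t→∞} R(t) = 0. -/
noncomputable def P0 (x : ℝ) : ℝ := (x * (Real.cosh x / Real.sinh x) - 1) / x ^ 2

/-!
Put `V = log R - (μ/3) ∫₀ᵗ (Φ - σ)`. Since `Φ - σ` has mean zero over a period, its primitive is
periodic and hence bounded, so `V` differs from `log R` by a bounded amount, and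
`V' = -μ Φ (1/3 - P0 R) < 0`. If `V` stayed bounded below, `R` would stay in a compact subinterval
of `(0, ∞)`, on which `1/3 - P0` is bounded away from zero; then `V' ≤ -k < 0`, so `V → -∞`
after all. Hence `log R → -∞`, i.e. `R → 0`.
-/

open Real Set Filter

lemma strictMonoOn_Ici_of_hasDerivAt_pos {f f' : ℝ → ℝ} {a : ℝ}
    (hf : ∀ t, a ≤ t → HasDerivAt f (f' t) t) (hf' : ∀ t, a < t → 0 < f' t) :
    StrictMonoOn f (Ici a) :=
  strictMonoOn_of_hasDerivWithinAt_pos (convex_Ici a)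
    (fun t ht ↦ (hf t ht).continuousAt.continuousWithinAt)
    (fun t ht ↦ by
      rw [interior_Ici] at ht
      exact (hf t ht.le).hasDerivWithinAt)
    (fun t ht ↦ by rw [interior_Ici] at ht; exact hf' t ht)

lemma antitoneOn_Ici_of_hasDerivAt_nonpos {f f' : ℝ → ℝ} {a : ℝ}
    (hf : ∀ t, a ≤ t → HasDerivAt f (f' t) t) (hf' : ∀ t, a < t → f' t ≤ 0) :
    AntitoneOn f (Ici a) :=
  antitoneOn_of_hasDerivWithinAt_nonpos (convex_Ici a)
    (fun t ht ↦ (hf t ht).continuousAt.continuousWithinAt)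
    (fun t ht ↦ by
      rw [interior_Ici] at ht
      exact (hf t ht.le).hasDerivWithinAt)
    (fun t ht ↦ by rw [interior_Ici] at ht; exact hf' t ht)

lemma sinh_lt_mul_cosh {x : ℝ} (hx : 0 < x) : sinh x < x * cosh x := by
  have hmono : StrictMonoOn (fun y ↦ y * cosh y - sinh y) (Ici 0) := by
    refine strictMonoOn_Ici_of_hasDerivAt_pos (f' := fun y ↦ y * sinh y)
      (fun y _ ↦ ?_) (fun y hy ↦ mul_pos hy (sinh_pos_iff.mpr hy))
    exact (((hasDerivAt_id' y).mul (hasDerivAt_cosh y)).sub (hasDerivAt_sinh y)).congr_deriv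
      (by ring)
  simpa using hmono self_mem_Ici hx.le hx

lemma three_mul_sub_lt_sq_mul_sinh {x : ℝ} (hx : 0 < x) :
    3 * (x * cosh x - sinh x) < x ^ 2 * sinh x := by
  have hmono : StrictMonoOn (fun y ↦ y ^ 2 * sinh y - 3 * (y * cosh y - sinh y)) (Ici 0) := by
    refine strictMonoOn_Ici_of_hasDerivAt_pos (f' := fun y ↦ y * (y * cosh y - sinh y))
      (fun y _ ↦ ?_) (fun y hy ↦ mul_pos hy (sub_pos.mpr (sinh_lt_mul_cosh hy)))
    exact (((hasDerivAt_pow 2 y).mul (hasDerivAt_sinh y)).sub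
      ((((hasDerivAt_id' y).mul (hasDerivAt_cosh y)).sub (hasDerivAt_sinh y)).const_mul 3)
      ).congr_deriv (by ring)
  simpa using hmono self_mem_Ici hx.le hx

lemma P0_lt_one_third {x : ℝ} (hx : 0 < x) : P0 x < 1 / 3 := by
  have hsinh := sinh_pos_iff.mpr hx
  have hP0 : P0 x = (x * cosh x - sinh x) / (sinh x * x ^ 2) := by
    unfold P0; field_simp
  rw [hP0, div_lt_iff₀ (by positivity)]
  linarith [three_mul_sub_lt_sq_mul_sinh hx]

lemma continuousOn_P0 : ContinuousOn P0 (Ioi 0) := by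
  have hsinh : ∀ x ∈ Ioi (0 : ℝ), sinh x ≠ 0 := fun x hx ↦ (sinh_pos_iff.mpr hx).ne'
  refine ContinuousOn.div ?_ (by fun_prop) fun x hx ↦ pow_ne_zero 2 (ne_of_gt hx)
  exact (continuousOn_id.mul
    (continuous_cosh.continuousOn.div continuous_sinh.continuousOn hsinh)).sub continuousOn_const

namespace Function.Periodic

variable {f : ℝ → ℝ} {T : ℝ}

lemma exists_pos_le_of_continuous (hf : Periodic f T) (hT : T ≠ 0) (hfc : Continuous f)
    (hpos : ∀ t, 0 < f t) : ∃ m, 0 < m ∧ ∀ t, m ≤ f t := by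
  obtain ⟨m, hm, hle⟩ := (hf.compact_of_continuous hT hfc).exists_forall_le' continuousOn_id
    (a := 0) (by rintro _ ⟨t, rfl⟩; exact hpos t)
  exact ⟨m, hm, fun t ↦ hle _ ⟨t, rfl⟩⟩

lemma periodic_primitive (hf : Periodic f T) (hfc : Continuous f)
    (hzero : ∫ x in 0..T, f x = 0) : Periodic (fun t ↦ ∫ x in 0..t, f x) T := fun t ↦ by
  simpa [hzero] using hf.intervalIntegral_add_eq_add 0 t hfc.intervalIntegrable

lemma exists_abs_primitive_le (hf : Periodic f T) (hT : T ≠ 0) (hfc : Continuous f)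
    (hzero : ∫ x in 0..T, f x = 0) : ∃ C, ∀ t, |∫ x in 0..t, f x| ≤ C := by
  obtain ⟨C, hC⟩ := isBounded_iff_forall_norm_le.mp <|
    (hf.periodic_primitive hfc hzero).isBounded_of_continuous hT
      (intervalIntegral.continuous_primitive hfc.intervalIntegrable 0)
  exact ⟨C, fun t ↦ hC _ ⟨t, rfl⟩⟩

end Function.Periodic

lemma tendsto_atBot_of_hasDerivAt_le_neg {V V' : ℝ → ℝ} {k : ℝ} (hk : 0 < k)
    (hV : ∀ t, 0 ≤ t → HasDerivAt V (V' t) t) (hV' : ∀ t, 0 < t → V' t ≤ -k) :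
    Tendsto V atTop atBot := by
  have hanti : AntitoneOn (fun t ↦ V t + k * t) (Ici 0) :=
    antitoneOn_Ici_of_hasDerivAt_nonpos
      (fun t ht ↦ (hV t ht).add ((hasDerivAt_id' t).const_mul k))
      (fun t ht ↦ by linarith [hV' t ht])
  refine tendsto_atBot_mono' atTop ?_ <| tendsto_atBot_add_const_left _ (V 0) <|
    tendsto_id.const_mul_atTop_of_neg (neg_neg_of_pos hk)
  filter_upwards [eventually_ge_atTop 0] with t ht
  have := hanti self_mem_Ici ht ht
  simp only [mul_zero, add_zero, id] at this ⊢
  linarith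

lemma tendsto_atBot_of_hasDerivAt_eq_neg_mul {V R w h : ℝ → ℝ} {m C : ℝ} (hm : 0 < m)
    (hw : ∀ t, 0 ≤ t → m ≤ w t) (hh : ContinuousOn h (Ioi 0)) (hpos : ∀ x, 0 < x → 0 < h x)
    (hR : ∀ t, 0 ≤ t → 0 < R t) (hRV : ∀ t, 0 ≤ t → |log (R t) - V t| ≤ C)
    (hV : ∀ t, 0 ≤ t → HasDerivAt V (-(w t * h (R t))) t) :
    Tendsto V atTop atBot := by
  have hwh : ∀ t, 0 ≤ t → m * h (R t) ≤ w t * h (R t) := fun t ht ↦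
    mul_le_mul_of_nonneg_right (hw t ht) (hpos _ (hR t ht)).le
  have hanti : AntitoneOn V (Ici 0) := antitoneOn_Ici_of_hasDerivAt_nonpos hV fun t ht ↦ by
    nlinarith [hwh t ht.le, hpos _ (hR t ht.le)]
  by_contra hbot
  obtain ⟨L, hL⟩ : ∃ L, ∀ t, 0 ≤ t → L ≤ V t := by
    obtain ⟨L, hL⟩ := not_forall.mp (mt tendsto_atBot.mpr hbot)
    refine ⟨L, fun t ht ↦ ?_⟩
    obtain ⟨s, hts, hLs⟩ := frequently_atTop.mp (not_eventually.mp hL) t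
    exact (not_le.mp hLs).le.trans (hanti ht (ht.trans hts) hts)
  -- the bounds on `V` trap `R` in a compact subinterval of `(0, ∞)`
  have hRmem : ∀ t, 0 ≤ t → R t ∈ Icc (exp (L - C)) (exp (V 0 + C)) := fun t ht ↦ by
    have hlog := abs_le.mp (hRV t ht)
    rw [mem_Icc, ← le_log_iff_exp_le (hR t ht), ← log_le_iff_le_exp (hR t ht)]
    constructor <;> linarith [hL t ht, hanti self_mem_Ici ht ht]
  obtain ⟨c, hc, hhc⟩ := isCompact_Icc.exists_forall_le' (a := 0)
    (hh.mono fun x hx ↦ (exp_pos _).trans_le hx.1) fun x hx ↦ hpos x ((exp_pos _).trans_le hx.1)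
  refine hbot (tendsto_atBot_of_hasDerivAt_le_neg (mul_pos hm hc) hV fun t ht ↦ ?_)
  nlinarith [hwh t ht.le, hhc _ (hRmem t ht.le)]

theorem R_tendsto_zero
    (T : ℝ) (hT : 0 < T) (Φ : ℝ → ℝ) (hΦc : Continuous Φ)
    (hΦpos : ∀ t, 0 < Φ t) (hΦper : ∀ t, Φ (t + T) = Φ t)
    (μ σ : ℝ) (hμ : 0 < μ)
    (hmean : σ = (1 / T) * ∫ t in (0 : ℝ)..T, Φ t)
    (R : ℝ → ℝ) (hRpos : ∀ t, 0 ≤ t → 0 < R t)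
    (hODE : ∀ t, 0 ≤ t → HasDerivAt R (μ * R t * (Φ t * P0 (R t) - σ / 3)) t) :
    Filter.Tendsto R Filter.atTop (nhds 0) := by
  set g : ℝ → ℝ := fun s ↦ μ / 3 * (Φ s - σ)
  have hgc : Continuous g := by fun_prop
  have hg0 : ∫ s in 0..T, g s = 0 := by
    simp only [g, intervalIntegral.integral_const_mul,
      intervalIntegral.integral_sub (hΦc.intervalIntegrable 0 T) intervalIntegrable_const,
      intervalIntegral.integral_const, hmean]
    field_simp
    ring
  obtain ⟨C, hC⟩ := Function.Periodic.exists_abs_primitive_le (fun t ↦ by simp [g, hΦper t])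
    hT.ne' hgc hg0
  obtain ⟨m, hm, hΦm⟩ := Function.Periodic.exists_pos_le_of_continuous hΦper hT.ne' hΦc hΦpos
  set V : ℝ → ℝ := fun t ↦ log (R t) - ∫ s in 0..t, g s
  have hV : ∀ t, 0 ≤ t → HasDerivAt V (-(μ * Φ t * (1 / 3 - P0 (R t)))) t := fun t ht ↦ by
    refine ((hODE t ht).log (hRpos t ht).ne' |>.sub
      (hgc.integral_hasStrictDerivAt 0 t).hasDerivAt).congr_deriv ?_
    field_simp [(hRpos t ht).ne']
    ring
  have hVbot : Tendsto V atTop atBot :=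
    tendsto_atBot_of_hasDerivAt_eq_neg_mul (mul_pos hμ hm)
      (fun t _ ↦ mul_le_mul_of_nonneg_left (hΦm t) hμ.le)
      (continuousOn_const.sub continuousOn_P0) (fun x hx ↦ sub_pos.mpr (P0_lt_one_third hx))
      hRpos (fun t _ ↦ by simpa [V] using hC t) hV
  have hlog : Tendsto (fun t ↦ log (R t)) atTop atBot :=
    tendsto_atBot_mono (fun t ↦ by linarith [(abs_le.mp (hC t)).2])
      (tendsto_atBot_add_const_right _ C hVbot)
  refine (tendsto_exp_atBot.comp hlog).congr' ?_
  filter_upwards [eventually_ge_atTop 0] with t ht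
  exact exp_log (hRpos t ht)
end

section
/- Let Φ be continuous, positive, T-periodic with mean Φ̄, 0 < σ̃ < Φ̄, μ > 0, Φ* = max Φ, and let x̄ = P₀⁻¹(σ̃/(3Φ̄))·e^{−μ(Φ*−σ̃)T/3}. If R̄ solves R̄'(t) = μ R̄(t)(Φ(t) P₀(R̄(t)) − σ̃/3) with R̄(0) = x̄, then R̄(T) ≥ x̄. -/
open Real Set

lemma monotoneOn_of_hasDerivAt_nonneg {f f' : ℝ → ℝ} {s : Set ℝ} (hs : Convex ℝ s)
    (hf : ∀ x ∈ s, HasDerivAt f (f' x) x) (hf' : ∀ x ∈ interior s, 0 ≤ f' x) :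
    MonotoneOn f s :=
  monotoneOn_of_hasDerivWithinAt_nonneg hs
    (fun x hx ↦ (hf x hx).continuousAt.continuousWithinAt)
    (fun x hx ↦ (hf x (interior_subset hx)).hasDerivWithinAt) hf'

lemma nonneg_of_hasDerivAt_nonneg {f f' : ℝ → ℝ} (h₀ : f 0 = 0)
    (hf : ∀ x, HasDerivAt f (f' x) x) (hf' : ∀ x, 0 ≤ x → 0 ≤ f' x) {x : ℝ} (hx : 0 ≤ x) :
    0 ≤ f x :=
  h₀ ▸ monotoneOn_of_hasDerivAt_nonneg (convex_Ici 0) (fun x _ ↦ hf x)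
    (fun x hx ↦ hf' x (interior_subset hx)) self_mem_Ici hx hx

lemma sinh_le_mul_cosh {x : ℝ} (hx : 0 ≤ x) : sinh x ≤ x * cosh x := by
  have hderiv (y : ℝ) : HasDerivAt (fun y ↦ y * cosh y - sinh y) (y * sinh y) y :=
    (((hasDerivAt_id y).mul (hasDerivAt_cosh y)).sub (hasDerivAt_sinh y)).congr_deriv
      (by simp only [id]; ring)
  have := nonneg_of_hasDerivAt_nonneg (by simp) hderiv
    (fun y hy ↦ mul_nonneg hy (sinh_nonneg_iff.2 hy)) hx
  linarith

lemma three_mul_mul_cosh_le {x : ℝ} (hx : 0 ≤ x) :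
    3 * x * cosh x ≤ (3 + x ^ 2) * sinh x := by
  have hderiv (y : ℝ) : HasDerivAt (fun y ↦ (3 + y ^ 2) * sinh y - 3 * y * cosh y)
      (y * (y * cosh y - sinh y)) y :=
    ((((hasDerivAt_pow 2 y).const_add 3).mul (hasDerivAt_sinh y)).sub
      (((hasDerivAt_id y).const_mul 3).mul (hasDerivAt_cosh y))).congr_deriv
      (by simp only [id]; ring)
  have := nonneg_of_hasDerivAt_nonneg (by simp) hderiv
    (fun y hy ↦ mul_nonneg hy (sub_nonneg.2 (sinh_le_mul_cosh hy))) hx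
  linarith

lemma two_mul_sinh_sq_le {x : ℝ} (hx : 0 ≤ x) :
    2 * sinh x ^ 2 ≤ x * sinh x * cosh x + x ^ 2 := by
  have hderiv₂ (y : ℝ) : HasDerivAt
      (fun y ↦ y * cosh y ^ 2 + y * sinh y ^ 2 + 2 * y - 3 * sinh y * cosh y)
      (4 * sinh y * (y * cosh y - sinh y)) y :=
    (((((hasDerivAt_id y).mul ((hasDerivAt_cosh y).pow 2)).add
      ((hasDerivAt_id y).mul ((hasDerivAt_sinh y).pow 2))).add
      ((hasDerivAt_id y).const_mul 2)).sub
      (((hasDerivAt_sinh y).const_mul 3).mul (hasDerivAt_cosh y))).congr_deriv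
      (by simp only [id, Pi.pow_apply]; linear_combination -2 * cosh_sq y)
  have hderiv₁ (y : ℝ) : HasDerivAt (fun y ↦ y * sinh y * cosh y + y ^ 2 - 2 * sinh y ^ 2)
      (y * cosh y ^ 2 + y * sinh y ^ 2 + 2 * y - 3 * sinh y * cosh y) y :=
    (((((hasDerivAt_id y).mul (hasDerivAt_sinh y)).mul (hasDerivAt_cosh y)).add
      (hasDerivAt_pow 2 y)).sub (((hasDerivAt_sinh y).pow 2).const_mul 2)).congr_deriv
      (by simp only [id, Pi.mul_apply]; ring)
  have := nonneg_of_hasDerivAt_nonneg (by simp) hderiv₁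
    (fun y hy ↦ nonneg_of_hasDerivAt_nonneg (by simp) hderiv₂ (fun u hu ↦
      mul_nonneg (mul_nonneg (by norm_num) (sinh_nonneg_iff.2 hu))
        (sub_nonneg.2 (sinh_le_mul_cosh hu))) hy) hx
  linarith

lemma P0_le_one_third {x : ℝ} (hx : 0 < x) : P0 x ≤ 1 / 3 := by
  have hs : 0 < sinh x := sinh_pos_iff.2 hx
  rw [P0, div_le_iff₀ (by positivity), sub_le_iff_le_add, mul_div_assoc', div_le_iff₀ hs]
  linarith [three_mul_mul_cosh_le hx.le]

lemma hasDerivAt_P0 {x : ℝ} (hx : 0 < x) :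
    HasDerivAt P0
      ((2 * sinh x ^ 2 - x * sinh x * cosh x - x ^ 2) / (x ^ 3 * sinh x ^ 2)) x := by
  have hs : sinh x ≠ 0 := (sinh_pos_iff.2 hx).ne'
  refine ((((hasDerivAt_id x).mul ((hasDerivAt_cosh x).div (hasDerivAt_sinh x) hs)).sub_const
    1).div (hasDerivAt_pow 2 x) (by positivity)).congr_deriv ?_
  simp only [id, Pi.mul_apply, Pi.div_apply]
  field_simp
  linear_combination -x ^ 3 * cosh_sq x

lemma P0_antitoneOn : AntitoneOn P0 (Ioi 0) := by
  have := monotoneOn_of_hasDerivAt_nonneg (convex_Ioi 0) (fun x hx ↦ (hasDerivAt_P0 hx).neg)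
    fun x hx ↦ by
      rw [interior_Ioi, mem_Ioi] at hx
      have : 0 < x ^ 3 * sinh x ^ 2 := by have := sinh_pos_iff.2 hx; positivity
      exact neg_nonneg.2 (div_nonpos_of_nonpos_of_nonneg
        (by linarith [two_mul_sinh_sq_le hx.le]) this.le)
  exact fun a ha b hb hab ↦ neg_le_neg_iff.1 (this ha hb hab)

lemma mul_exp_sub_le_of_mul_le_deriv {R R' G G' : ℝ → ℝ} {a b : ℝ} (hab : a ≤ b)
    (hR : ∀ t ∈ Icc a b, HasDerivAt R (R' t) t) (hG : ∀ t ∈ Icc a b, HasDerivAt G (G' t) t)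
    (hle : ∀ t ∈ Ioo a b, R t * G' t ≤ R' t) : R a * exp (G b - G a) ≤ R b := by
  have hmono : MonotoneOn (fun t ↦ R t * exp (-G t)) (Icc a b) :=
    monotoneOn_of_hasDerivAt_nonneg (convex_Icc a b)
      (fun t ht ↦ (hR t ht).mul (hG t ht).neg.exp) fun t ht ↦ by
        rw [interior_Icc] at ht
        calc 0 ≤ (R' t - R t * G' t) * exp (-G t) :=
              mul_nonneg (sub_nonneg.2 (hle t ht)) (exp_pos _).le
          _ = _ := by simp only [Pi.neg_apply]; ring
  have := mul_le_mul_of_nonneg_right (hmono (left_mem_Icc.2 hab) (right_mem_Icc.2 hab) hab)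
    (exp_pos (G b)).le
  rwa [mul_assoc, mul_assoc, ← exp_add, ← exp_add, neg_add_cancel, exp_zero, mul_one,
    neg_add_eq_sub] at this

lemma le_mul_exp_sub_of_deriv_le_mul {R R' G G' : ℝ → ℝ} {a b : ℝ} (hab : a ≤ b)
    (hR : ∀ t ∈ Icc a b, HasDerivAt R (R' t) t) (hG : ∀ t ∈ Icc a b, HasDerivAt G (G' t) t)
    (hle : ∀ t ∈ Ioo a b, R' t ≤ R t * G' t) : R b ≤ R a * exp (G b - G a) := by
  have := mul_exp_sub_le_of_mul_le_deriv (R := -R) (R' := -R') hab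
    (fun t ht ↦ (hR t ht).neg) hG fun t ht ↦ by simpa [neg_mul] using hle t ht
  simpa [neg_mul] using this

lemma intervalIntegral_le_mul_of_le {f : ℝ → ℝ} {a b M : ℝ} (hab : a ≤ b)
    (hf : IntervalIntegrable f MeasureTheory.volume a b) (hM : ∀ t ∈ Icc a b, f t ≤ M) :
    ∫ t in a..b, f t ≤ M * (b - a) := by
  simpa [mul_comm] using intervalIntegral.integral_mono_on hab hf intervalIntegrable_const hM

def IsP0Solution (Φ : ℝ → ℝ) (μ σ : ℝ) (R : ℝ → ℝ) : Prop :=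
  ∀ t, 0 ≤ t → HasDerivAt R (μ * R t * (Φ t * P0 (R t) - σ / 3)) t

namespace IsP0Solution

variable {Φ R : ℝ → ℝ} {μ σ T : ℝ}

lemma le_mul_exp (hR : IsP0Solution Φ μ σ R) (hΦ : ∀ t, 0 ≤ Φ t) (hμ : 0 ≤ μ)
    (hRpos : ∀ t, 0 ≤ t → 0 < R t) {M : ℝ} (hM : ∀ t ∈ Icc 0 T, Φ t ≤ M) {t : ℝ}
    (ht : t ∈ Icc 0 T) : R t ≤ R 0 * exp (t * (μ * (M - σ) / 3)) := by
  have := le_mul_exp_sub_of_deriv_le_mul ht.1 (fun s hs ↦ hR s hs.1)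
    (fun s _ ↦ hasDerivAt_mul_const (μ * (M - σ) / 3)) fun s hs ↦ by
      have hs' : s ∈ Icc 0 T := ⟨hs.1.le, hs.2.le.trans ht.2⟩
      have hRs := hRpos s hs'.1
      have hΦP0 : Φ s * P0 (R s) ≤ M / 3 :=
        calc Φ s * P0 (R s) ≤ Φ s * (1 / 3) :=
              mul_le_mul_of_nonneg_left (P0_le_one_third hRs) (hΦ s)
          _ ≤ M / 3 := by linarith [hM s hs']
      calc μ * R s * (Φ s * P0 (R s) - σ / 3) ≤ μ * R s * ((M - σ) / 3) := by
            gcongr; linarith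
        _ = R s * (μ * (M - σ) / 3) := by ring
  simpa using this

lemma mul_exp_le (hR : IsP0Solution Φ μ σ R) (hT : 0 ≤ T) (hΦc : Continuous Φ)
    (hΦ : ∀ t, 0 ≤ Φ t) (hμ : 0 ≤ μ) (hRnonneg : ∀ t, 0 ≤ t → 0 ≤ R t) {p : ℝ}
    (hp : ∀ t ∈ Icc 0 T, p ≤ P0 (R t)) :
    R 0 * exp (μ * p * (∫ t in (0 : ℝ)..T, Φ t) - T * (μ * σ / 3)) ≤ R T := by
  have := mul_exp_sub_le_of_mul_le_deriv hT (fun s hs ↦ hR s hs.1)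
    (G := fun t ↦ μ * p * (∫ s in (0 : ℝ)..t, Φ s) - t * (μ * σ / 3))
    (fun s _ ↦ ((intervalIntegral.integral_hasDerivAt_right (hΦc.intervalIntegrable 0 s)
      hΦc.stronglyMeasurable.stronglyMeasurableAtFilter hΦc.continuousAt).const_mul _).sub
      (hasDerivAt_mul_const _)) fun s hs ↦ by
        have := hRnonneg s hs.1.le
        have := hΦ s
        calc R s * (μ * p * Φ s - μ * σ / 3) = μ * R s * (Φ s * p - σ / 3) := by ring
          _ ≤ μ * R s * (Φ s * P0 (R s) - σ / 3) := by
            gcongr; exact hp s (Ioo_subset_Icc_self hs)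
  simpa using this

end IsP0Solution

theorem lower_barrier_general
    (T : ℝ) (hT : 0 < T) (Φ : ℝ → ℝ) (hΦc : Continuous Φ)
    (hΦpos : ∀ t, 0 < Φ t)
    (μ σ : ℝ) (hμ : 0 < μ) (hσ : 0 < σ)
    (Φbar : ℝ) (hΦbar : Φbar = (1 / T) * ∫ t in (0 : ℝ)..T, Φ t)
    (hσlt : σ < Φbar)
    (Φstar : ℝ) (hΦstar : IsGreatest (Φ '' Set.Icc 0 T) Φstar)
    (z : ℝ) (hzpos : 0 < z) (hz : P0 z = σ / (3 * Φbar))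
    (xbar : ℝ) (hxbar : xbar = z * Real.exp (-(μ * (Φstar - σ) / 3 * T)))
    (R : ℝ → ℝ) (hRpos : ∀ t, 0 ≤ t → 0 < R t)
    (hODE : ∀ t, 0 ≤ t → HasDerivAt R (μ * R t * (Φ t * P0 (R t) - σ / 3)) t)
    (hR0 : R 0 = xbar) :
    R T ≥ xbar := by
  have hR : IsP0Solution Φ μ σ R := hODE
  have hΦ (t : ℝ) : 0 ≤ Φ t := (hΦpos t).le
  have hΦint : ∫ t in (0 : ℝ)..T, Φ t = Φbar * T := by rw [hΦbar]; field_simp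
  have hΦ_le (t : ℝ) (ht : t ∈ Icc 0 T) : Φ t ≤ Φstar := hΦstar.2 ⟨t, ht, rfl⟩
  have hΦbar_le : Φbar ≤ Φstar := by
    have := intervalIntegral_le_mul_of_le hT.le (hΦc.intervalIntegrable 0 T) hΦ_le
    rw [hΦint, sub_zero] at this
    exact le_of_mul_le_mul_right this hT
  have hR_le (t : ℝ) (ht : t ∈ Icc 0 T) : R t ≤ z :=
    calc R t ≤ xbar * exp (t * (μ * (Φstar - σ) / 3)) :=
          hR0 ▸ hR.le_mul_exp hΦ hμ.le hRpos hΦ_le ht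
      _ ≤ xbar * exp (T * (μ * (Φstar - σ) / 3)) := by
          have : σ ≤ Φstar := by linarith
          gcongr
          · exact hR0 ▸ (hRpos 0 le_rfl).le
          · exact ht.2
      _ = z := by rw [hxbar, mul_assoc, ← exp_add, mul_comm T, neg_add_cancel, exp_zero, mul_one]
  have hP0_ge (t : ℝ) (ht : t ∈ Icc 0 T) : σ / (3 * Φbar) ≤ P0 (R t) :=
    hz ▸ P0_antitoneOn (hRpos t ht.1) hzpos (hR_le t ht)
  have hlower := hR.mul_exp_le hT.le hΦc hΦ hμ.le (fun t ht ↦ (hRpos t ht).le) hP0_ge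
  have hΦbar_pos : 0 < Φbar := hσ.trans hσlt
  have hexponent : μ * (σ / (3 * Φbar)) * (Φbar * T) - T * (μ * σ / 3) = 0 := by
    field_simp; ring
  rwa [hΦint, hexponent, exp_zero, mul_one, hR0] at hlower

theorem lower_barrier
    (T : ℝ) (hT : 0 < T) (Φ : ℝ → ℝ) (hΦc : Continuous Φ)
    (hΦpos : ∀ t, 0 < Φ t) (hΦper : ∀ t, Φ (t + T) = Φ t)
    (μ σ : ℝ) (hμ : 0 < μ) (hσ : 0 < σ)
    (Φbar : ℝ) (hΦbar : Φbar = (1 / T) * ∫ t in (0 : ℝ)..T, Φ t)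
    (hσlt : σ < Φbar)
    (Φstar : ℝ) (hΦstar : IsGreatest (Φ '' Set.Icc 0 T) Φstar)
    (z : ℝ) (hzpos : 0 < z) (hz : P0 z = σ / (3 * Φbar))
    (xbar : ℝ) (hxbar : xbar = z * Real.exp (-(μ * (Φstar - σ) / 3 * T)))
    (R : ℝ → ℝ) (hRpos : ∀ t, 0 ≤ t → 0 < R t)
    (hODE : ∀ t, 0 ≤ t → HasDerivAt R (μ * R t * (Φ t * P0 (R t) - σ / 3)) t)
    (hR0 : R 0 = xbar) :
    R T ≥ xbar :=
  lower_barrier_general T hT Φ hΦc hΦpos μ σ hμ hσ Φbar hΦbar hσlt Φstar hΦstar z hzpos hz xbar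
    hxbar R hRpos hODE hR0
end
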